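/- arXiv:math/0503568 — 8 statements merged into one kernel-verified Lean document; each statement's English description precedes it below -/
import Mathlib

section
/- The operator T = S + Ŝ satisfies T³ = (m² − b²)·T + 2m·J∘T², where b² = |X|²|Y|² − ⟨X,Y⟩² and m = ⟨X,JY⟩. -/
open scoped RealInnerProductSpace

/-- `T = S + Ŝ` satisfies `T³ = (m² − b²) T + 2m J∘T²`, where
`b² = ‖X‖²‖Y‖² − ⟪X,Y⟫²` and `m = ⟪X,JY⟫`. -/
theorem stmt_6 {V : Type*} [NormedAddCommGroup V] [InnerProductSpace ℝ V]
    (X Y : V) (J S Shat : V →ₗ[ℝ] V)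
    (hJ2 : ∀ Z, J (J Z) = -Z)
    (hJskew : ∀ A B : V, ⟪J A, B⟫ = -⟪A, J B⟫)
    (hJiso : ∀ Z, ‖J Z‖ = ‖Z‖)
    (hS : ∀ Z, S Z = ⟪Y, Z⟫ • X - ⟪X, Z⟫ • Y)
    (hShat : ∀ Z, Shat Z = ⟪J Y, Z⟫ • J X - ⟪J X, Z⟫ • J Y) :
    (S + Shat) ^ 3 =
      (⟪X, J Y⟫ ^ 2 - (‖X‖ ^ 2 * ‖Y‖ ^ 2 - ⟪X, Y⟫ ^ 2)) • (S + Shat)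
        + (2 * ⟪X, J Y⟫) • (J ∘ₗ (S + Shat) ^ 2) := by
  have hXX : ⟪X, X⟫ = ‖X‖ ^ 2 := real_inner_self_eq_norm_sq X
  have hYY : ⟪Y, Y⟫ = ‖Y‖ ^ 2 := real_inner_self_eq_norm_sq Y
  have hJXX : ⟪J X, X⟫ = 0 := by
    have := hJskew X X
    have h2 : ⟪X, J X⟫ = ⟪J X, X⟫ := real_inner_comm _ _
    linarith [this, h2]
  have hJYY : ⟪J Y, Y⟫ = 0 := by
    have := hJskew Y Y
    have h2 : ⟪Y, J Y⟫ = ⟪J Y, Y⟫ := real_inner_comm _ _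
    linarith [this, h2]
  have hXJX : ⟪X, J X⟫ = 0 := by rw [real_inner_comm]; exact hJXX
  have hYJY : ⟪Y, J Y⟫ = 0 := by rw [real_inner_comm]; exact hJYY
  have hJXJY : ⟪J X, J Y⟫ = ⟪X, Y⟫ := by
    rw [hJskew, hJ2, inner_neg_right, neg_neg]
  have hJYJX : ⟪J Y, J X⟫ = ⟪X, Y⟫ := by rw [real_inner_comm]; exact hJXJY
  have hJXJX : ⟪J X, J X⟫ = ‖X‖ ^ 2 := by
    rw [hJskew, hJ2, inner_neg_right, neg_neg, hXX]
  have hJYJY : ⟪J Y, J Y⟫ = ‖Y‖ ^ 2 := by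
    rw [hJskew, hJ2, inner_neg_right, neg_neg, hYY]
  have hJXY : ⟪J X, Y⟫ = -⟪X, J Y⟫ := hJskew X Y
  have hYJX : ⟪Y, J X⟫ = -⟪X, J Y⟫ := by rw [real_inner_comm]; exact hJXY
  have hJYX : ⟪J Y, X⟫ = ⟪X, J Y⟫ := real_inner_comm _ _
  have hYX : ⟪Y, X⟫ = ⟪X, Y⟫ := real_inner_comm _ _
  ext Z
  simp only [pow_succ, pow_zero, pow_one, Module.End.one_apply, Module.End.mul_apply, LinearMap.add_apply,
    LinearMap.coe_comp, Function.comp_apply, LinearMap.smul_apply, hS, hShat,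
    inner_sub_right, inner_add_right, inner_smul_right, map_add, map_sub, map_smul,
    hJ2, inner_neg_right, inner_neg_left, map_neg, neg_smul, smul_neg, neg_neg, smul_sub, smul_add, smul_smul,
    hXX, hYY, hJXX, hJYY, hXJX, hYJY, hJXJY, hJYJX, hJXJX, hJYJY, hJXY, hYJX, hJYX, hYX]
  module
end

section
/- For the curvature operator R of a complex space form, R³ is a linear combination of J∘R², R, and J with coefficients that are polynomials in 1/c, b, and m; explicitly, there exist real numbers α, β, γ (depending only on c, b = |X∧Y|, m = ⟨X,JY⟩) such that R³ = α·J∘R² + β·R + γ·J. -/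
open scoped RealInnerProductSpace

/-- for the curvature operator `R` of a complex space form (`c ≠ 0`),
there exist reals `α β γ` with `R³ = α J∘R² + β R + γ J`. -/
theorem stmt_7 {V : Type*} [NormedAddCommGroup V] [InnerProductSpace ℝ V]
    (c : ℝ) (hc : c ≠ 0) (X Y : V) (J R : V →ₗ[ℝ] V)
    (hJ2 : ∀ Z, J (J Z) = -Z)
    (hJskew : ∀ A B : V, ⟪J A, B⟫ = -⟪A, J B⟫)
    (hJiso : ∀ Z, ‖J Z‖ = ‖Z‖)
    (hR : ∀ Z, R Z = (c / 4) • (⟪Y, Z⟫ • X - ⟪X, Z⟫ • Y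
      + ⟪J Y, Z⟫ • J X - ⟪J X, Z⟫ • J Y + (2 * ⟪X, J Y⟫) • J Z)) :
    ∃ α β γ : ℝ, R ^ 3 = α • (J ∘ₗ R ^ 2) + β • R + γ • J := by
  have hJJ : ∀ A B : V, ⟪J A, J B⟫ = ⟪A, B⟫ := by
    intro A B; rw [hJskew, hJ2, inner_neg_right, neg_neg]
  have hself : ∀ A : V, ⟪A, J A⟫ = 0 := by
    intro A
    have h := hJskew A A
    have h2 : ⟪J A, A⟫ = ⟪A, J A⟫ := real_inner_comm _ _
    linarith [h, h2]
  set n1 : ℝ := ⟪X, X⟫ with hn1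
  set n2 : ℝ := ⟪Y, Y⟫ with hn2
  set a : ℝ := ⟪X, Y⟫ with ha
  set m : ℝ := ⟪X, J Y⟫ with hm
  refine ⟨2 * m * c, (c / 4) ^ 2 * (21 * m ^ 2 - (n1 * n2 - a ^ 2)),
    (c / 4) ^ 3 * (2 * m * (n1 * n2 - a ^ 2) - 18 * m ^ 3), ?_⟩
  ext Z
  have e1 : ⟪Y, X⟫ = a := (real_inner_comm Y X).symm
  have e2 : ⟪Y, J X⟫ = -m := by
    rw [show ⟪Y, J X⟫ = ⟪J X, Y⟫ from real_inner_comm _ _, hJskew, hm]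
  have e3 : ⟪Y, J Y⟫ = 0 := hself Y
  have e4 : ⟪Y, J Z⟫ = -⟪J Y, Z⟫ := by rw [hJskew]; ring
  have e5 : ⟪X, J X⟫ = 0 := hself X
  have e6 : ⟪X, J Z⟫ = -⟪J X, Z⟫ := by rw [hJskew]; ring
  have e7 : ⟪J Y, X⟫ = m := by rw [real_inner_comm, hm]
  have e8 : ⟪J Y, Y⟫ = 0 := by rw [real_inner_comm]; exact e3
  have e9 : ⟪J Y, J X⟫ = a := by rw [hJJ, real_inner_comm, ha]
  have e10 : ⟪J Y, J Y⟫ = n2 := by rw [hJJ, hn2]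
  have e11 : ⟪J Y, J Z⟫ = ⟪Y, Z⟫ := hJJ Y Z
  have e12 : ⟪J X, X⟫ = 0 := by rw [real_inner_comm]; exact e5
  have e13 : ⟪J X, Y⟫ = -m := by rw [hJskew, hm]
  have e14 : ⟪J X, J X⟫ = n1 := by rw [hJJ, hn1]
  have e15 : ⟪J X, J Y⟫ = a := by rw [hJJ, ha]
  have e16 : ⟪J X, J Z⟫ = ⟪X, Z⟫ := hJJ X Z
  simp only [pow_succ, pow_zero, Module.End.one_eq_id, LinearMap.id_comp, Module.End.mul_apply,
    LinearMap.add_apply, LinearMap.smul_apply, LinearMap.comp_apply, Module.End.one_apply,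
    one_mul, LinearMap.id_apply]
  simp only [hR, inner_add_right, inner_sub_right, inner_smul_right, real_inner_smul_right,
    map_add, map_sub, map_smul, map_neg, hJ2, smul_add, smul_sub, smul_neg, smul_smul,
    inner_neg_right, e1, e2, e3, e4, e5, e6, e7, e8, e9, e10, e11, e12, e13, e14, e15, e16,
    ← hn1, ← hn2, ← ha, ← hm]
  module
end

section
/- For the curvature operator R of a complex space form, R⁴ is a linear combination of R², J∘R², J∘R, R, J, and the identity E; in particular every power R^p with p ≥ 4 lies in the span of {R², J∘R, E, J∘R², R, J}. -/
open scoped RealInnerProductSpace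

/-- `R⁴` is a linear combination of `R², J∘R², J∘R, R, J, E`, and every
power `R^p` with `p ≥ 4` lies in the span of `{R², J∘R, E, J∘R², R, J}`. -/
theorem stmt_8 {V : Type*} [NormedAddCommGroup V] [InnerProductSpace ℝ V]
    (c : ℝ) (hc : c ≠ 0) (X Y : V) (J R : V →ₗ[ℝ] V)
    (hJ2 : ∀ Z, J (J Z) = -Z)
    (hJskew : ∀ A B : V, ⟪J A, B⟫ = -⟪A, J B⟫)
    (hJiso : ∀ Z, ‖J Z‖ = ‖Z‖)
    (hR : ∀ Z, R Z = (c / 4) • (⟪Y, Z⟫ • X - ⟪X, Z⟫ • Y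
      + ⟪J Y, Z⟫ • J X - ⟪J X, Z⟫ • J Y + (2 * ⟪X, J Y⟫) • J Z)) :
    (∃ a₁ a₂ a₃ a₄ a₅ a₆ : ℝ,
      R ^ 4 = a₁ • (R ^ 2) + a₂ • (J ∘ₗ R ^ 2) + a₃ • (J ∘ₗ R) + a₄ • R
        + a₅ • J + a₆ • (LinearMap.id : V →ₗ[ℝ] V)) ∧
    ∀ p : ℕ, 4 ≤ p →
      R ^ p ∈ Submodule.span ℝ
        ({R ^ 2, J ∘ₗ R, LinearMap.id, J ∘ₗ R ^ 2, R, J} : Set (V →ₗ[ℝ] V)) := by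
  -- basic inner-product facts
  have hYX : ⟪Y, X⟫ = ⟪X, Y⟫ := real_inner_comm _ _
  have hXJX : ⟪X, J X⟫ = 0 := by
    have h1 := hJskew X X
    have h2 : ⟪J X, X⟫ = ⟪X, J X⟫ := real_inner_comm _ _
    linarith
  have hYJY : ⟪Y, J Y⟫ = 0 := by
    have h1 := hJskew Y Y
    have h2 : ⟪J Y, Y⟫ = ⟪Y, J Y⟫ := real_inner_comm _ _
    linarith
  have hYJX : ⟪Y, J X⟫ = -⟪X, J Y⟫ := by
    rw [real_inner_comm, hJskew]
  -- coefficients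
  set α : ℝ := 2 * ⟪X, J Y⟫ * c with hα
  set β : ℝ := (20 * ⟪X, J Y⟫^2 - (⟪X, X⟫ * ⟪Y, Y⟫ - ⟪X, Y⟫^2 - ⟪X, J Y⟫^2)) * c^2 / 16 with hβ
  set γ : ℝ := (⟪X, J Y⟫ * (⟪X, X⟫ * ⟪Y, Y⟫ - ⟪X, Y⟫^2 - ⟪X, J Y⟫^2)
      - 8 * ⟪X, J Y⟫^3) * c^3 / 32 with hγ
  -- commutation of R and J
  have hcomm : ∀ Z, R (J Z) = J (R Z) := by
    intro Z
    simp only [hR, map_add, map_sub, map_smul, map_neg, hJ2, inner_add_right,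
      inner_sub_right, inner_smul_right, inner_neg_right, hJskew, hXJX, hYJY,
      hYJX, hYX, smul_add, smul_sub, smul_smul, smul_neg, neg_smul, neg_neg,
      inner_neg_left]
    module
  have hcomm' : R * J = J * R := LinearMap.ext fun Z => hcomm Z
  have hJJ : J * J = -(1 : V →ₗ[ℝ] V) := by
    ext Z
    simp [Module.End.mul_apply, hJ2]
  -- the cubic relation
  have hcube : R ^ 3 = α • (J * R ^ 2) + β • R + γ • J := by
    ext Z
    have h3 : (R ^ 3) Z = R (R (R Z)) := by
      rw [pow_succ, pow_succ, pow_one]; rfl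
    have h2 : (R ^ 2) Z = R (R Z) := by rw [pow_two]; rfl
    simp only [LinearMap.add_apply, LinearMap.smul_apply, Module.End.mul_apply,
      h3, h2, hα, hβ, hγ]
    simp only [hR, map_add, map_sub, map_smul, map_neg, hJ2, inner_add_right,
      inner_sub_right, inner_smul_right, inner_neg_right, hJskew, hXJX, hYJY,
      hYJX, hYX, smul_add, smul_sub, smul_smul, smul_neg, neg_smul, neg_neg,
      inner_neg_left]
    match_scalars <;> ring
  -- J ∘ R³
  have hJR3 : J * R ^ 3 = (-α) • R ^ 2 + β • (J * R) + (-γ) • (1 : V →ₗ[ℝ] V) := by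
    rw [hcube, mul_add, mul_add, mul_smul_comm, mul_smul_comm, mul_smul_comm,
      ← mul_assoc, hJJ]
    simp only [neg_mul, one_mul, smul_neg]
    module
  -- the quartic relation
  have hR4 : R ^ 4 = (β - α^2) • R ^ 2 + (α*β + γ) • (J * R)
      + (-(α*γ)) • (1 : V →ₗ[ℝ] V) := by
    have h43 : R ^ 4 = R * R ^ 3 := by rw [← pow_succ']
    have hRR2 : R * R ^ 2 = R ^ 3 := by rw [← pow_succ']
    rw [h43, hcube, mul_add, mul_add, mul_smul_comm, mul_smul_comm, mul_smul_comm,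
      ← mul_assoc, hcomm', mul_assoc, hRR2, hJR3, ← pow_two]
    module
  constructor
  · exact ⟨β - α^2, 0, α*β + γ, 0, 0, -(α*γ), by
      rw [hR4, Module.End.mul_eq_comp]
      module⟩
  · intro p hp
    set S := Submodule.span ℝ
      ({R ^ 2, J ∘ₗ R, LinearMap.id, J ∘ₗ R ^ 2, R, J} : Set (V →ₗ[ℝ] V)) with hS
    have m1 : R ^ 2 ∈ S := Submodule.subset_span (by simp)
    have m2 : J ∘ₗ R ∈ S := Submodule.subset_span (by simp)
    have m3 : (LinearMap.id : V →ₗ[ℝ] V) ∈ S := Submodule.subset_span (by simp)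
    have m4 : J ∘ₗ R ^ 2 ∈ S := Submodule.subset_span (by simp)
    have m5 : R ∈ S := Submodule.subset_span (by simp)
    have m6 : J ∈ S := Submodule.subset_span (by simp)
    have hid : (1 : V →ₗ[ℝ] V) = LinearMap.id := rfl
    have hclose : ∀ T, T ∈ S → R * T ∈ S := by
      intro T hT
      induction hT using Submodule.span_induction with
      | mem x hx =>
        simp only [Set.mem_insert_iff, Set.mem_singleton_iff] at hx
        rcases hx with rfl | rfl | rfl | rfl | rfl | rfl
        · have : R * R ^ 2 = R ^ 3 := by rw [← pow_succ']
          rw [this, hcube, Module.End.mul_eq_comp]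
          exact add_mem (add_mem (Submodule.smul_mem _ _ m4) (Submodule.smul_mem _ _ m5))
            (Submodule.smul_mem _ _ m6)
        · have : R * (J ∘ₗ R) = J ∘ₗ R ^ 2 := by
            rw [← Module.End.mul_eq_comp, ← Module.End.mul_eq_comp, ← mul_assoc,
              hcomm', mul_assoc, ← pow_two]
          rw [this]; exact m4
        · have : R * (LinearMap.id : V →ₗ[ℝ] V) = R := by
            rw [Module.End.mul_eq_comp, LinearMap.comp_id]
          rw [this]; exact m5
        · have : R * (J ∘ₗ R ^ 2) = J * R ^ 3 := by
            rw [← Module.End.mul_eq_comp, ← mul_assoc, hcomm', mul_assoc, ← pow_succ']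
          rw [this, hJR3, Module.End.mul_eq_comp, hid]
          exact add_mem (add_mem (Submodule.smul_mem _ _ m1) (Submodule.smul_mem _ _ m2))
            (Submodule.smul_mem _ _ m3)
        · rw [← pow_two]; exact m1
        · rw [hcomm', Module.End.mul_eq_comp]; exact m2
      | zero => simp
      | add x y hx hy ihx ihy => rw [mul_add]; exact add_mem ihx ihy
      | smul t x hx ih => rw [mul_smul_comm]; exact Submodule.smul_mem _ _ ih
    induction p, hp using Nat.le_induction with
    | base =>
      rw [hR4, Module.End.mul_eq_comp, hid]
      exact add_mem (add_mem (Submodule.smul_mem _ _ m1) (Submodule.smul_mem _ _ m2))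
        (Submodule.smul_mem _ _ m3)
    | succ n hn ih =>
      have : R ^ (n + 1) = R * R ^ n := by rw [← pow_succ']
      rw [this]
      exact hclose _ ih
end

section
/- With S = S_{XY}, Sᵢ = S_{JᵢX,JᵢY}, Ŝ = S₁+S₂+S₃, and 𝒥 = m₁J₁+m₂J₂+m₃J₃, the operators S + Ŝ and 𝒥 commute: (S+Ŝ)∘𝒥 = 𝒥∘(S+Ŝ). -/
open scoped RealInnerProductSpace

/-- `S + Ŝ` commutes with `𝒥 = m₁J₁+m₂J₂+m₃J₃`. -/
theorem stmt_10 {V : Type*} [NormedAddCommGroup V] [InnerProductSpace ℝ V]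
    (X Y : V) (J₁ J₂ J₃ S S₁ S₂ S₃ : V →ₗ[ℝ] V)
    (h1 : ∀ Z, J₁ (J₁ Z) = -Z) (h2 : ∀ Z, J₂ (J₂ Z) = -Z) (h3 : ∀ Z, J₃ (J₃ Z) = -Z)
    (h12 : J₁ ∘ₗ J₂ = J₃) (h23 : J₂ ∘ₗ J₃ = J₁) (h31 : J₃ ∘ₗ J₁ = J₂)
    (hs1 : ∀ A B : V, ⟪J₁ A, B⟫ = -⟪A, J₁ B⟫)
    (hs2 : ∀ A B : V, ⟪J₂ A, B⟫ = -⟪A, J₂ B⟫)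
    (hs3 : ∀ A B : V, ⟪J₃ A, B⟫ = -⟪A, J₃ B⟫)
    (hi1 : ∀ Z, ‖J₁ Z‖ = ‖Z‖) (hi2 : ∀ Z, ‖J₂ Z‖ = ‖Z‖) (hi3 : ∀ Z, ‖J₃ Z‖ = ‖Z‖)
    (hS : ∀ Z, S Z = ⟪Y, Z⟫ • X - ⟪X, Z⟫ • Y)
    (hS1 : ∀ Z, S₁ Z = ⟪J₁ Y, Z⟫ • J₁ X - ⟪J₁ X, Z⟫ • J₁ Y)
    (hS2 : ∀ Z, S₂ Z = ⟪J₂ Y, Z⟫ • J₂ X - ⟪J₂ X, Z⟫ • J₂ Y)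
    (hS3 : ∀ Z, S₃ Z = ⟪J₃ Y, Z⟫ • J₃ X - ⟪J₃ X, Z⟫ • J₃ Y) :
    (S + (S₁ + S₂ + S₃)) ∘ₗ (⟪X, J₁ Y⟫ • J₁ + ⟪X, J₂ Y⟫ • J₂ + ⟪X, J₃ Y⟫ • J₃) = (⟪X, J₁ Y⟫ • J₁ + ⟪X, J₂ Y⟫ • J₂ + ⟪X, J₃ Y⟫ • J₃) ∘ₗ (S + (S₁ + S₂ + S₃)) := by
  have c12 : ∀ W, J₁ (J₂ W) = J₃ W := fun W => by rw [← h12]; rfl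
  have c23 : ∀ W, J₂ (J₃ W) = J₁ W := fun W => by rw [← h23]; rfl
  have c31 : ∀ W, J₃ (J₁ W) = J₂ W := fun W => by rw [← h31]; rfl
  have c21 : ∀ W, J₂ (J₁ W) = -(J₃ W) := fun W => by rw [← c23 W, h2]
  have c32 : ∀ W, J₃ (J₂ W) = -(J₁ W) := fun W => by rw [← c31 W, h3]
  have c13 : ∀ W, J₁ (J₃ W) = -(J₂ W) := fun W => by rw [← c12 W, h1]
  have e1 : ∀ A Z : V, ⟪A, J₁ Z⟫ = -⟪J₁ A, Z⟫ := fun A Z => by rw [hs1]; ring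
  have e2 : ∀ A Z : V, ⟪A, J₂ Z⟫ = -⟪J₂ A, Z⟫ := fun A Z => by rw [hs2]; ring
  have e3 : ∀ A Z : V, ⟪A, J₃ Z⟫ = -⟪J₃ A, Z⟫ := fun A Z => by rw [hs3]; ring
  ext Z
  simp only [LinearMap.comp_apply, LinearMap.add_apply, LinearMap.smul_apply,
    hS, hS1, hS2, hS3, map_add, map_sub, map_smul, map_neg,
    inner_add_right, inner_sub_right, real_inner_smul_right, inner_neg_right,
    e1, e2, e3, c12, c23, c31, c21, c32, c13, h1, h2, h3,
    inner_neg_left, map_neg, smul_neg, neg_neg]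
  module
end

section
/- For the quaternionic sphere-type operators, the identity S₁∘S₂ = −m₃·J₃∘S₂ holds, where m₃ = ⟨X,J₃Y⟩. -/
open scoped RealInnerProductSpace

/-- `S₁ ∘ S₂ = −m₃ J₃ ∘ S₂`, where `m₃ = ⟪X,J₃Y⟫`. -/
theorem stmt_11 {V : Type*} [NormedAddCommGroup V] [InnerProductSpace ℝ V]
    (X Y : V) (J₁ J₂ J₃ S S₁ S₂ S₃ : V →ₗ[ℝ] V)
    (h1 : ∀ Z, J₁ (J₁ Z) = -Z) (h2 : ∀ Z, J₂ (J₂ Z) = -Z) (h3 : ∀ Z, J₃ (J₃ Z) = -Z)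
    (h12 : J₁ ∘ₗ J₂ = J₃) (h23 : J₂ ∘ₗ J₃ = J₁) (h31 : J₃ ∘ₗ J₁ = J₂)
    (hs1 : ∀ A B : V, ⟪J₁ A, B⟫ = -⟪A, J₁ B⟫)
    (hs2 : ∀ A B : V, ⟪J₂ A, B⟫ = -⟪A, J₂ B⟫)
    (hs3 : ∀ A B : V, ⟪J₃ A, B⟫ = -⟪A, J₃ B⟫)
    (hi1 : ∀ Z, ‖J₁ Z‖ = ‖Z‖) (hi2 : ∀ Z, ‖J₂ Z‖ = ‖Z‖) (hi3 : ∀ Z, ‖J₃ Z‖ = ‖Z‖)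
    (hS : ∀ Z, S Z = ⟪Y, Z⟫ • X - ⟪X, Z⟫ • Y)
    (hS1 : ∀ Z, S₁ Z = ⟪J₁ Y, Z⟫ • J₁ X - ⟪J₁ X, Z⟫ • J₁ Y)
    (hS2 : ∀ Z, S₂ Z = ⟪J₂ Y, Z⟫ • J₂ X - ⟪J₂ X, Z⟫ • J₂ Y)
    (hS3 : ∀ Z, S₃ Z = ⟪J₃ Y, Z⟫ • J₃ X - ⟪J₃ X, Z⟫ • J₃ Y) :
    S₁ ∘ₗ S₂ = (-⟪X, J₃ Y⟫) • (J₃ ∘ₗ S₂) := by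

  have hJ12 : ∀ Z, J₁ (J₂ Z) = J₃ Z := fun Z => by rw [← h12]; rfl
  have hJ31 : ∀ Z, J₃ (J₁ Z) = J₂ Z := fun Z => by rw [← h31]; rfl
  have hJ32 : ∀ Z, J₃ (J₂ Z) = -J₁ Z := by
    intro Z; rw [← hJ31 Z, h3]
  have hXX : ⟪J₁ X, J₂ X⟫ = 0 := by
    have := hs1 X (J₂ X)
    rw [hJ12] at this
    have h0 : ⟪X, J₃ X⟫ = 0 := by
      have h' := hs3 X X
      have : ⟪X, J₃ X⟫ = -⟪J₃ X, X⟫ := by linarith [h']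
      rw [real_inner_comm X (J₃ X)] at this; linarith
    rw [h0] at this; simpa using this
  have hYY : ⟪J₁ Y, J₂ Y⟫ = 0 := by
    have := hs1 Y (J₂ Y)
    rw [hJ12] at this
    have h0 : ⟪Y, J₃ Y⟫ = 0 := by
      have h' := hs3 Y Y
      have : ⟪Y, J₃ Y⟫ = -⟪J₃ Y, Y⟫ := by linarith [h']
      rw [real_inner_comm Y (J₃ Y)] at this; linarith
    rw [h0] at this; simpa using this
  have hYX : ⟪J₁ Y, J₂ X⟫ = ⟪X, J₃ Y⟫ := by
    have t := hs1 Y (J₂ X)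
    rw [hJ12] at t
    have t2 := hs3 Y X
    have h' := real_inner_comm X (J₃ Y)
    linarith
  have hXY : ⟪J₁ X, J₂ Y⟫ = -⟪X, J₃ Y⟫ := by
    have t := hs1 X (J₂ Y)
    rw [hJ12] at t
    linarith
  ext Z
  simp only [LinearMap.comp_apply, LinearMap.smul_apply, hS2, hS1, map_sub, map_smul,
    inner_sub_right, inner_smul_right, hJ32, hXX, hYY, hYX, hXY, smul_neg, smul_smul]
  module
end

section
/- The identities S∘Ŝ = S∘𝒥 and Ŝ∘S = 𝒥∘S hold, where S = S_{XY}, Ŝ = S₁+S₂+S₃, and 𝒥 = m₁J₁+m₂J₂+m₃J₃. -/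
open scoped RealInnerProductSpace

/-- `S∘Ŝ = S∘𝒥` and `Ŝ∘S = 𝒥∘S`. -/
theorem stmt_12 {V : Type*} [NormedAddCommGroup V] [InnerProductSpace ℝ V]
    (X Y : V) (J₁ J₂ J₃ S S₁ S₂ S₃ : V →ₗ[ℝ] V)
    (h1 : ∀ Z, J₁ (J₁ Z) = -Z) (h2 : ∀ Z, J₂ (J₂ Z) = -Z) (h3 : ∀ Z, J₃ (J₃ Z) = -Z)
    (h12 : J₁ ∘ₗ J₂ = J₃) (h23 : J₂ ∘ₗ J₃ = J₁) (h31 : J₃ ∘ₗ J₁ = J₂)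
    (hs1 : ∀ A B : V, ⟪J₁ A, B⟫ = -⟪A, J₁ B⟫)
    (hs2 : ∀ A B : V, ⟪J₂ A, B⟫ = -⟪A, J₂ B⟫)
    (hs3 : ∀ A B : V, ⟪J₃ A, B⟫ = -⟪A, J₃ B⟫)
    (hi1 : ∀ Z, ‖J₁ Z‖ = ‖Z‖) (hi2 : ∀ Z, ‖J₂ Z‖ = ‖Z‖) (hi3 : ∀ Z, ‖J₃ Z‖ = ‖Z‖)
    (hS : ∀ Z, S Z = ⟪Y, Z⟫ • X - ⟪X, Z⟫ • Y)
    (hS1 : ∀ Z, S₁ Z = ⟪J₁ Y, Z⟫ • J₁ X - ⟪J₁ X, Z⟫ • J₁ Y)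
    (hS2 : ∀ Z, S₂ Z = ⟪J₂ Y, Z⟫ • J₂ X - ⟪J₂ X, Z⟫ • J₂ Y)
    (hS3 : ∀ Z, S₃ Z = ⟪J₃ Y, Z⟫ • J₃ X - ⟪J₃ X, Z⟫ • J₃ Y) :
    S ∘ₗ (S₁ + S₂ + S₃) = S ∘ₗ (⟪X, J₁ Y⟫ • J₁ + ⟪X, J₂ Y⟫ • J₂ + ⟪X, J₃ Y⟫ • J₃) ∧
    (S₁ + S₂ + S₃) ∘ₗ S = (⟪X, J₁ Y⟫ • J₁ + ⟪X, J₂ Y⟫ • J₂ + ⟪X, J₃ Y⟫ • J₃) ∘ₗ S := by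
  have e1 : ∀ A B : V, ⟪A, J₁ B⟫ = -⟪J₁ A, B⟫ := fun A B => by rw [hs1]; ring
  have e2 : ∀ A B : V, ⟪A, J₂ B⟫ = -⟪J₂ A, B⟫ := fun A B => by rw [hs2]; ring
  have e3 : ∀ A B : V, ⟪A, J₃ B⟫ = -⟪J₃ A, B⟫ := fun A B => by rw [hs3]; ring
  have zX1 : ⟪J₁ X, X⟫ = 0 := by have := hs1 X X; have h := real_inner_comm (J₁ X) X; linarith [real_inner_comm X (J₁ X) ▸ this]
  have key : ∀ (J : V →ₗ[ℝ] V), (∀ A B : V, ⟪J A, B⟫ = -⟪A, J B⟫) →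
      (∀ W : V, ⟪J W, W⟫ = 0) := by
    intro J hJ W
    have := hJ W W
    have h2 := real_inner_comm W (J W)
    linarith
  have zX1 := key J₁ hs1 X; have zY1 := key J₁ hs1 Y
  have zX2 := key J₂ hs2 X; have zY2 := key J₂ hs2 Y
  have zX3 := key J₃ hs3 X; have zY3 := key J₃ hs3 Y
  have cYX1 : ⟪J₁ X, Y⟫ = -⟪X, J₁ Y⟫ := hs1 X Y
  have cYX2 : ⟪J₂ X, Y⟫ = -⟪X, J₂ Y⟫ := hs2 X Y
  have cYX3 : ⟪J₃ X, Y⟫ = -⟪X, J₃ Y⟫ := hs3 X Y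
  constructor <;> apply LinearMap.ext <;> intro Z <;>
    simp only [LinearMap.comp_apply, LinearMap.add_apply, LinearMap.smul_apply,
      hS, hS1, hS2, hS3, inner_add_right, inner_sub_right, inner_smul_right,
      smul_sub, smul_smul, inner_smul_left, RCLike.star_def, starRingEnd_apply, star_trivial,
      map_add, map_sub, map_smul]
  all_goals {
    have c1 : ⟪J₁ X, Y⟫ = -⟪J₁ Y, X⟫ := by rw [cYX1, real_inner_comm]
    have c2 : ⟪J₂ X, Y⟫ = -⟪J₂ Y, X⟫ := by rw [cYX2, real_inner_comm]
    have c3 : ⟪J₃ X, Y⟫ = -⟪J₃ Y, X⟫ := by rw [cYX3, real_inner_comm]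
    simp only [e1, e2, e3, zX1, zX2, zX3, zY1, zY2, zY3, c1, c2, c3]
    match_scalars <;> ring }
end

section
/- The identity Ŝ² = S₁² + S₂² + S₃² − Ŝ∘𝒥 + 𝒥∘S holds. -/
open scoped RealInnerProductSpace

/-- `Ŝ² = S₁² + S₂² + S₃² − Ŝ∘𝒥 + 𝒥∘S`. -/
theorem stmt_13 {V : Type*} [NormedAddCommGroup V] [InnerProductSpace ℝ V]
    (X Y : V) (J₁ J₂ J₃ S S₁ S₂ S₃ : V →ₗ[ℝ] V)
    (h1 : ∀ Z, J₁ (J₁ Z) = -Z) (h2 : ∀ Z, J₂ (J₂ Z) = -Z) (h3 : ∀ Z, J₃ (J₃ Z) = -Z)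
    (h12 : J₁ ∘ₗ J₂ = J₃) (h23 : J₂ ∘ₗ J₃ = J₁) (h31 : J₃ ∘ₗ J₁ = J₂)
    (hs1 : ∀ A B : V, ⟪J₁ A, B⟫ = -⟪A, J₁ B⟫)
    (hs2 : ∀ A B : V, ⟪J₂ A, B⟫ = -⟪A, J₂ B⟫)
    (hs3 : ∀ A B : V, ⟪J₃ A, B⟫ = -⟪A, J₃ B⟫)
    (hi1 : ∀ Z, ‖J₁ Z‖ = ‖Z‖) (hi2 : ∀ Z, ‖J₂ Z‖ = ‖Z‖) (hi3 : ∀ Z, ‖J₃ Z‖ = ‖Z‖)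
    (hS : ∀ Z, S Z = ⟪Y, Z⟫ • X - ⟪X, Z⟫ • Y)
    (hS1 : ∀ Z, S₁ Z = ⟪J₁ Y, Z⟫ • J₁ X - ⟪J₁ X, Z⟫ • J₁ Y)
    (hS2 : ∀ Z, S₂ Z = ⟪J₂ Y, Z⟫ • J₂ X - ⟪J₂ X, Z⟫ • J₂ Y)
    (hS3 : ∀ Z, S₃ Z = ⟪J₃ Y, Z⟫ • J₃ X - ⟪J₃ X, Z⟫ • J₃ Y) :
    (S₁ + S₂ + S₃) ∘ₗ (S₁ + S₂ + S₃) =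
      S₁ ∘ₗ S₁ + S₂ ∘ₗ S₂ + S₃ ∘ₗ S₃
        - (S₁ + S₂ + S₃) ∘ₗ (⟪X, J₁ Y⟫ • J₁ + ⟪X, J₂ Y⟫ • J₂ + ⟪X, J₃ Y⟫ • J₃) + (⟪X, J₁ Y⟫ • J₁ + ⟪X, J₂ Y⟫ • J₂ + ⟪X, J₃ Y⟫ • J₃) ∘ₗ S := by
  -- pointwise composition lemmas
  have p12 : ∀ Z, J₁ (J₂ Z) = J₃ Z := fun Z => LinearMap.congr_fun h12 Z
  have p23 : ∀ Z, J₂ (J₃ Z) = J₁ Z := fun Z => LinearMap.congr_fun h23 Z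
  have p31 : ∀ Z, J₃ (J₁ Z) = J₂ Z := fun Z => LinearMap.congr_fun h31 Z
  have p21 : ∀ Z, J₂ (J₁ Z) = -J₃ Z := by
    intro Z; rw [← p23 Z, h2]
  have p32 : ∀ Z, J₃ (J₂ Z) = -J₁ Z := by
    intro Z; rw [← p31 Z, h3]
  have p13 : ∀ Z, J₁ (J₃ Z) = -J₂ Z := by
    intro Z; rw [← p12 Z, h1]
  -- move J's to the left argument of inner products
  have l1 : ∀ A B : V, ⟪A, J₁ B⟫ = -⟪J₁ A, B⟫ := fun A B => by rw [hs1]; ring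
  have l2 : ∀ A B : V, ⟪A, J₂ B⟫ = -⟪J₂ A, B⟫ := fun A B => by rw [hs2]; ring
  have l3 : ∀ A B : V, ⟪A, J₃ B⟫ = -⟪J₃ A, B⟫ := fun A B => by rw [hs3]; ring
  -- orthogonality facts
  have hp1 : ⟪J₁ X, X⟫ = 0 := by
    have h := hs1 X X; have h' := real_inner_comm X (J₁ X); linarith
  have hp2 : ⟪J₂ X, X⟫ = 0 := by
    have h := hs2 X X; have h' := real_inner_comm X (J₂ X); linarith
  have hp3 : ⟪J₃ X, X⟫ = 0 := by
    have h := hs3 X X; have h' := real_inner_comm X (J₃ X); linarith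
  have hq1 : ⟪J₁ Y, Y⟫ = 0 := by
    have h := hs1 Y Y; have h' := real_inner_comm Y (J₁ Y); linarith
  have hq2 : ⟪J₂ Y, Y⟫ = 0 := by
    have h := hs2 Y Y; have h' := real_inner_comm Y (J₂ Y); linarith
  have hq3 : ⟪J₃ Y, Y⟫ = 0 := by
    have h := hs3 Y Y; have h' := real_inner_comm Y (J₃ Y); linarith
  -- normal form: ⟪J_i Y, X⟫ = -⟪J_i X, Y⟫
  have hc1 : ⟪J₁ Y, X⟫ = -⟪J₁ X, Y⟫ := by
    rw [real_inner_comm, l1]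
  have hc2 : ⟪J₂ Y, X⟫ = -⟪J₂ X, Y⟫ := by
    rw [real_inner_comm, l2]
  have hc3 : ⟪J₃ Y, X⟫ = -⟪J₃ X, Y⟫ := by
    rw [real_inner_comm, l3]
  ext Z
  simp only [LinearMap.add_apply, LinearMap.coe_comp, Function.comp_apply,
    LinearMap.sub_apply, LinearMap.smul_apply, hS, hS1, hS2, hS3,
    map_add, map_sub, map_smul, inner_add_right, inner_sub_right,
    inner_smul_right, smul_smul, smul_sub, smul_add, smul_neg]
  simp only [l1, l2, l3, p12, p23, p31, p21, p32, p13, h1, h2, h3,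
    map_neg, inner_neg_left, inner_neg_right, neg_neg, smul_neg, neg_smul,
    hp1, hp2, hp3, hq1, hq2, hq3, hc1, hc2, hc3]
  module
end

section
/- The identity Ŝ∘(S₁²+S₂²+S₃²) = −b²·Ŝ − (S₁²+S₂²+S₃²)∘𝒥 + 𝒥∘S² holds (as stated in the paper's list of auxiliary products, with b² = |X∧Y|²). -/
open scoped RealInnerProductSpace

/-- `Ŝ∘(S₁²+S₂²+S₃²) = −b² Ŝ − (S₁²+S₂²+S₃²)∘𝒥 + 𝒥∘S²`,
with `b² = ‖X‖²‖Y‖² − ⟪X,Y⟫²`. -/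
theorem stmt_14 {V : Type*} [NormedAddCommGroup V] [InnerProductSpace ℝ V]
    (X Y : V) (J₁ J₂ J₃ S S₁ S₂ S₃ : V →ₗ[ℝ] V)
    (h1 : ∀ Z, J₁ (J₁ Z) = -Z) (h2 : ∀ Z, J₂ (J₂ Z) = -Z) (h3 : ∀ Z, J₃ (J₃ Z) = -Z)
    (h12 : J₁ ∘ₗ J₂ = J₃) (h23 : J₂ ∘ₗ J₃ = J₁) (h31 : J₃ ∘ₗ J₁ = J₂)
    (hs1 : ∀ A B : V, ⟪J₁ A, B⟫ = -⟪A, J₁ B⟫)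
    (hs2 : ∀ A B : V, ⟪J₂ A, B⟫ = -⟪A, J₂ B⟫)
    (hs3 : ∀ A B : V, ⟪J₃ A, B⟫ = -⟪A, J₃ B⟫)
    (hi1 : ∀ Z, ‖J₁ Z‖ = ‖Z‖) (hi2 : ∀ Z, ‖J₂ Z‖ = ‖Z‖) (hi3 : ∀ Z, ‖J₃ Z‖ = ‖Z‖)
    (hS : ∀ Z, S Z = ⟪Y, Z⟫ • X - ⟪X, Z⟫ • Y)
    (hS1 : ∀ Z, S₁ Z = ⟪J₁ Y, Z⟫ • J₁ X - ⟪J₁ X, Z⟫ • J₁ Y)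
    (hS2 : ∀ Z, S₂ Z = ⟪J₂ Y, Z⟫ • J₂ X - ⟪J₂ X, Z⟫ • J₂ Y)
    (hS3 : ∀ Z, S₃ Z = ⟪J₃ Y, Z⟫ • J₃ X - ⟪J₃ X, Z⟫ • J₃ Y) :
    (S₁ + S₂ + S₃) ∘ₗ (S₁ ∘ₗ S₁ + S₂ ∘ₗ S₂ + S₃ ∘ₗ S₃) =
      (-(‖X‖ ^ 2 * ‖Y‖ ^ 2 - ⟪X, Y⟫ ^ 2)) • (S₁ + S₂ + S₃)
        - (S₁ ∘ₗ S₁ + S₂ ∘ₗ S₂ + S₃ ∘ₗ S₃) ∘ₗ (⟪X, J₁ Y⟫ • J₁ + ⟪X, J₂ Y⟫ • J₂ + ⟪X, J₃ Y⟫ • J₃)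
        + (⟪X, J₁ Y⟫ • J₁ + ⟪X, J₂ Y⟫ • J₂ + ⟪X, J₃ Y⟫ • J₃) ∘ₗ (S ∘ₗ S) := by
  have j12 : ∀ Z, J₁ (J₂ Z) = J₃ Z := fun Z => LinearMap.congr_fun h12 Z
  have j23 : ∀ Z, J₂ (J₃ Z) = J₁ Z := fun Z => LinearMap.congr_fun h23 Z
  have j31 : ∀ Z, J₃ (J₁ Z) = J₂ Z := fun Z => LinearMap.congr_fun h31 Z
  have j21 : ∀ Z, J₂ (J₁ Z) = -(J₃ Z) := fun Z => by rw [← j23 Z, h2]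
  have j32 : ∀ Z, J₃ (J₂ Z) = -(J₁ Z) := fun Z => by rw [← j31 Z, h3]
  have j13 : ∀ Z, J₁ (J₃ Z) = -(J₂ Z) := fun Z => by rw [← j12 Z, h1]
  -- inner product reductions
  have e0 : ⟪Y, X⟫ = ⟪X, Y⟫ := real_inner_comm _ _
  have e1 : ⟪X, J₁ X⟫ = 0 := by
    linarith [hs1 X X, real_inner_comm X (J₁ X)]
  have e2 : ⟪X, J₂ X⟫ = 0 := by
    linarith [hs2 X X, real_inner_comm X (J₂ X)]
  have e3 : ⟪X, J₃ X⟫ = 0 := by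
    linarith [hs3 X X, real_inner_comm X (J₃ X)]
  have f1 : ⟪Y, J₁ Y⟫ = 0 := by
    linarith [hs1 Y Y, real_inner_comm Y (J₁ Y)]
  have f2 : ⟪Y, J₂ Y⟫ = 0 := by
    linarith [hs2 Y Y, real_inner_comm Y (J₂ Y)]
  have f3 : ⟪Y, J₃ Y⟫ = 0 := by
    linarith [hs3 Y Y, real_inner_comm Y (J₃ Y)]
  have g1 : ⟪Y, J₁ X⟫ = -⟪X, J₁ Y⟫ := by
    linarith [hs1 X Y, real_inner_comm Y (J₁ X)]
  have g2 : ⟪Y, J₂ X⟫ = -⟪X, J₂ Y⟫ := by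
    linarith [hs2 X Y, real_inner_comm Y (J₂ X)]
  have g3 : ⟪Y, J₃ X⟫ = -⟪X, J₃ Y⟫ := by
    linarith [hs3 X Y, real_inner_comm Y (J₃ X)]
  have nX : ⟪X, X⟫ = ‖X‖ ^ 2 := real_inner_self_eq_norm_sq X
  have nY : ⟪Y, Y⟫ = ‖Y‖ ^ 2 := real_inner_self_eq_norm_sq Y
  ext Z
  simp only [LinearMap.comp_apply, LinearMap.add_apply, LinearMap.smul_apply,
    LinearMap.sub_apply, hS, hS1, hS2, hS3, map_add, map_sub, map_smul, map_neg,
    inner_add_right, inner_sub_right, inner_smul_right, inner_neg_right,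
    inner_add_left, inner_sub_left, inner_smul_left, inner_neg_left,
    hs1, hs2, hs3, j12, j23, j31, j21, j32, j13, h1, h2, h3,
    smul_add, smul_sub, smul_neg, smul_smul, RCLike.inner_apply, conj_trivial,
    e0, e1, e2, e3, f1, f2, f3, g1, g2, g3, nX, nY]
  module
end
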